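/- Let E be a real Hilbert space and let h : E → ℝ be differentiable and η-approximately β-gradient Lipschitz, i.e. ‖∇h(θ1) − ∇h(θ2)‖ ≤ β‖θ1 − θ2‖ + η for all θ1, θ2, with β > 0, η > 0. If θ* is a global minimizer of h, then for every θ, h(θ*) − h(θ) ≤ −(1/(2β))·(max(‖∇h(θ)‖ − η, 0))². -/

import Mathlib

open RealInnerProductSpace

/-! Along the segment from `x` to `x + v` the gradient `g` drifts from `g x` by at most
`β * t * ‖v‖ + η`, which integrates to the approximate descent lemma
`f (x + v) ≤ f x + ⟪g x, v⟫ + β / 2 * ‖v‖ ^ 2 + η * ‖v‖`. A step from `x` against the gradient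
of length `(‖g x‖ - η) / β` therefore lowers `f` by at least `(‖g x‖ - η) ^ 2 / (2 * β)`, and the
minimum value of `f` lies below the value reached. -/

def ApproxLipschitzWith {E F : Type*} [NormedAddCommGroup E] [NormedAddCommGroup F]
    (β η : ℝ) (g : E → F) : Prop :=
  ∀ x y, ‖g x - g y‖ ≤ β * ‖x - y‖ + η

section

variable {E : Type*} [NormedAddCommGroup E] [InnerProductSpace ℝ E]
  {f : E → ℝ} {g : E → E} {β η : ℝ}

theorem ApproxLipschitzWith.inner_sub_le (hg : ApproxLipschitzWith β η g) (x v : E) {t : ℝ}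
    (ht : 0 ≤ t) : ⟪g (x + t • v) - g x, v⟫ ≤ (β * t * ‖v‖ + η) * ‖v‖ :=
  calc ⟪g (x + t • v) - g x, v⟫ ≤ ‖g (x + t • v) - g x‖ * ‖v‖ := real_inner_le_norm _ _
    _ ≤ (β * t * ‖v‖ + η) * ‖v‖ := by
      gcongr
      simpa [norm_smul, abs_of_nonneg ht, mul_assoc] using hg (x + t • v) x

variable [CompleteSpace E]

theorem HasGradientAt.hasDerivAt_comp_add_smul {x v y : E} {t : ℝ}
    (hf : HasGradientAt f y (x + t • v)) :
    HasDerivAt (fun s : ℝ => f (x + s • v)) ⟪y, v⟫ t := by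
  have hline : HasDerivAt (fun s : ℝ => x + s • v) v t := by
    simpa using ((hasDerivAt_id t).smul_const v).const_add x
  simpa [Function.comp_def] using hf.hasFDerivAt.comp_hasDerivAt t hline

theorem ApproxLipschitzWith.apply_add_le_of_hasGradientAt (hf : ∀ x, HasGradientAt f (g x) x)
    (hg : ApproxLipschitzWith β η g) (x v : E) :
    f (x + v) ≤ f x + ⟪g x, v⟫ + β / 2 * ‖v‖ ^ 2 + η * ‖v‖ := by
  set φ : ℝ → ℝ := fun t =>
    β / 2 * ‖v‖ ^ 2 * t ^ 2 + η * ‖v‖ * t - (f (x + t • v) - t * ⟪g x, v⟫)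
  have hφ : ∀ t, HasDerivAt φ
      (β * ‖v‖ ^ 2 * t + η * ‖v‖ - (⟪g (x + t • v), v⟫ - ⟪g x, v⟫)) t := by
    intro t
    have hquad := ((hasDerivAt_pow 2 t).const_mul (β / 2 * ‖v‖ ^ 2)).fun_add
      ((hasDerivAt_id' t).const_mul (η * ‖v‖))
    have hlin := (hf (x + t • v)).hasDerivAt_comp_add_smul.fun_sub
      ((hasDerivAt_id' t).mul_const ⟪g x, v⟫)
    refine (hquad.fun_sub hlin).congr_deriv ?_
    norm_num
    ring
  have hmono : MonotoneOn φ (Set.Ici 0) := by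
    refine monotoneOn_of_hasDerivWithinAt_nonneg (convex_Ici 0)
      (fun t _ => (hφ t).continuousAt.continuousWithinAt)
      (fun t _ => (hφ t).hasDerivWithinAt) fun t ht => ?_
    rw [interior_Ici] at ht
    have := hg.inner_sub_le x v (le_of_lt ht)
    rw [inner_sub_left] at this
    linarith
  have := hmono Set.self_mem_Ici (Set.mem_Ici.2 zero_le_one) zero_le_one
  norm_num [φ] at this
  linarith

theorem ApproxLipschitzWith.exists_apply_le_sub_sq (hf : ∀ x, HasGradientAt f (g x) x)
    (hg : ApproxLipschitzWith β η g) (hβ : 0 < β) (hη : 0 ≤ η) {x : E} (hx : η < ‖g x‖) :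
    ∃ y, f y ≤ f x - 1 / (2 * β) * (‖g x‖ - η) ^ 2 := by
  have hgx : 0 < ‖g x‖ := hη.trans_lt hx
  -- `r` minimizes `-r * (‖g x‖ - η) + β / 2 * r ^ 2`, the descent bound for a step of length `r`.
  set r := (‖g x‖ - η) / β
  have hr : 0 < r := div_pos (by linarith) hβ
  set v : E := -((r / ‖g x‖) • g x)
  refine ⟨x + v, ?_⟩
  have hnorm : ‖v‖ = r := by
    rw [norm_neg, norm_smul, Real.norm_eq_abs, abs_of_pos (div_pos hr hgx),
      div_mul_cancel₀ _ hgx.ne']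
  have hinner : ⟪g x, v⟫ = -(r * ‖g x‖) := by
    rw [inner_neg_right, real_inner_smul_right, real_inner_self_eq_norm_sq]
    field_simp
  have hquad : -(r * ‖g x‖) + β / 2 * r ^ 2 + η * r = -(1 / (2 * β) * (‖g x‖ - η) ^ 2) := by
    simp only [r]
    field_simp
    ring
  have := hg.apply_add_le_of_hasGradientAt hf x v
  rw [hnorm, hinner] at this
  linarith

end

/-- Approximate Polyak-type suboptimality bound at a global minimizer, for an
η-approximately β-gradient Lipschitz differentiable function. -/
theorem approx_polyak_at_minimizer
    {E : Type*} [NormedAddCommGroup E] [InnerProductSpace ℝ E] [CompleteSpace E]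
    (h : E → ℝ) (g : E → E) (β η : ℝ) (hβ : 0 < β) (hη : 0 < η)
    (hgrad : ∀ θ : E, HasGradientAt h (g θ) θ)
    (happrox : ∀ θ1 θ2 : E, ‖g θ1 - g θ2‖ ≤ β * ‖θ1 - θ2‖ + η)
    (θstar : E) (hmin : ∀ θ : E, h θstar ≤ h θ) :
    ∀ θ : E, h θstar - h θ ≤ -(1 / (2 * β)) * (max (‖g θ‖ - η) 0) ^ 2 := by
  intro θ
  rcases le_or_gt ‖g θ‖ η with hsmall | hlarge
  · rw [max_eq_right (by linarith)]
    simpa using hmin θ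
  · obtain ⟨θ', hθ'⟩ := ApproxLipschitzWith.exists_apply_le_sub_sq hgrad happrox hβ hη.le hlarge
    rw [max_eq_left (by linarith)]
    linarith [hmin θ']
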